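/- arXiv:1703.08104 — 5 statements merged into one kernel-verified Lean document; each statement's English description precedes it below -/
import Mathlib

section
/- For every positive integer n and every permutation σ in the symmetric group S_n, the number of disjoint cycles of σ plus the number of disjoint cycles of στ is at most n+1, i.e. ξ(σ) + ξ(στ) ≤ n + 1. -/
/-!
Let `ξ` count the orbits of a permutation. Multiplying by a transposition `(x y)` merges or
splits orbits, so it changes `ξ` by at most one, while for `σ x ≠ x` the transposition
`(x σx)` splits `x` off its orbit and raises `ξ(σ)`. Peeling such transpositions off `σ`
until the identity is reached gives `ξ(σ) + ξ(σπ) ≤ n + ξ(π)` for every `π`, and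
`ξ(τ) = 1`.
-/

/-- The number of disjoint cycles of a permutation, counting fixed points
(i.e. the number of orbits). -/
def cycleCount {β : Type*} [Fintype β] [DecidableEq β] (σ : Equiv.Perm β) : ℕ :=
  σ.cycleType.card + (Finset.univ.filter fun x => σ x = x).card

open Function

namespace Equiv.Perm

variable {α β : Type*}

noncomputable def numOrbits (σ : Perm α) : ℕ := Nat.card (Quotient (SameCycle.setoid σ))

theorem SameCycle.apply_eq_of_forall_apply_eq {σ : Perm α} {f : α → β}
    (hf : ∀ c, f (σ c) = f c) {a b : α} (h : σ.SameCycle a b) : f a = f b := by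
  obtain ⟨i, rfl⟩ := h
  induction i using Int.induction_on generalizing a with
  | zero => rfl
  | succ i ih => rw [zpow_add_one, mul_apply, ← ih, hf]
  | pred i ih => rw [zpow_sub_one, mul_apply, ← ih]; simpa using hf (σ⁻¹ a)

theorem mk_sameCycle_apply (σ : Perm α) (a : α) :
    Quotient.mk (SameCycle.setoid σ) (σ a) = Quotient.mk _ a :=
  Quot.sound (sameCycle_apply_left.2 SameCycle.rfl)

theorem numOrbits_le_card [Finite α] (σ : Perm α) : σ.numOrbits ≤ Nat.card α :=
  Nat.card_le_card_of_surjective _ Quotient.mk_surjective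

theorem ncard_range_le_numOrbits [Finite α] {σ : Perm α} {f : α → β}
    (hf : ∀ c, f (σ c) = f c) : (Set.range f).ncard ≤ σ.numOrbits :=
  Nat.card_le_card_of_surjective
    (Quotient.lift (Set.rangeFactorization f) fun _ _ h =>
      Subtype.ext (SameCycle.apply_eq_of_forall_apply_eq hf h))
    (by rintro ⟨_, a, rfl⟩; exact ⟨Quotient.mk _ a, rfl⟩)

theorem cycleCount_le_numOrbits [Fintype α] [DecidableEq α] (σ : Perm α) :
    cycleCount σ ≤ σ.numOrbits := by
  let f : α → σ.cycleFactorsFinset ⊕ {x // σ x = x} := fun a =>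
    if h : σ a = a then .inr ⟨a, h⟩
    else .inl ⟨σ.cycleOf a, cycleOf_mem_cycleFactorsFinset_iff.2 (mem_support.2 h)⟩
  have hf : ∀ c, f (σ c) = f c := by
    intro c
    by_cases hc : σ c = c
    · rw [hc]
    · simp [f, hc]
  have hsurj : Surjective f := by
    rintro (⟨c, hc⟩ | ⟨a, ha⟩)
    · obtain ⟨a, ha⟩ := (mem_cycleFactorsFinset_iff.1 hc).1.nonempty_support
      have hσa : σ a ≠ a := by
        rwa [← (mem_cycleFactorsFinset_iff.1 hc).2 a ha, ← mem_support]
      exact ⟨a, by simp [f, hσa, cycle_is_cycleOf ha hc]⟩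
    · exact ⟨a, by simp [f, ha]⟩
  calc cycleCount σ = (Set.range f).ncard := by
        rw [hsurj.range_eq, Set.ncard_univ, Nat.card_sum, Nat.card_eq_fintype_card,
          Nat.card_eq_fintype_card, Fintype.card_coe, Fintype.card_subtype, cycleCount,
          cycleType, Multiset.card_map]
        rfl
    _ ≤ σ.numOrbits := ncard_range_le_numOrbits hf

theorem numOrbits_le_numOrbits_swap_mul_add_one [Finite α] [DecidableEq α] (σ : Perm α)
    (x y : α) : σ.numOrbits ≤ (swap x y * σ).numOrbits + 1 := by
  classical
  let q : α → Quotient (SameCycle.setoid σ) := Quotient.mk _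
  -- Gluing the `σ`-orbits of `x` and `y` together yields a union of `(swap x y * σ)`-orbits.
  let glue : Quotient (SameCycle.setoid σ) → Quotient (SameCycle.setoid σ) :=
    fun o => if o = q y then q x else o
  have hglue : (glue ∘ q) x = (glue ∘ q) y := by
    simp only [comp_apply, glue]
    split_ifs <;> simp_all
  have hinv : ∀ c, (glue ∘ q) ((swap x y * σ) c) = (glue ∘ q) c := fun c => by
    rw [mul_apply, apply_swap_eq_self hglue]
    exact congrArg glue (mk_sameCycle_apply σ c)
  have hrange : ({q y}ᶜ : Set _) ⊆ Set.range (glue ∘ q) := by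
    intro o ho
    induction o using Quotient.inductionOn with
    | h a => exact ⟨a, if_neg ho⟩
  calc σ.numOrbits = ({q y}ᶜ : Set _).ncard + 1 := by
        rw [numOrbits, ← Set.ncard_add_ncard_compl {q y}, Set.ncard_singleton, add_comm]
    _ ≤ (Set.range (glue ∘ q)).ncard + 1 := Nat.add_le_add_right (Set.ncard_le_ncard hrange) 1
    _ ≤ (swap x y * σ).numOrbits + 1 := Nat.add_le_add_right (ncard_range_le_numOrbits hinv) 1

theorem numOrbits_lt_numOrbits_swap_mul [Finite α] [DecidableEq α] {σ : Perm α} {x : α}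
    (hx : σ x ≠ x) : σ.numOrbits < (swap x (σ x) * σ).numOrbits := by
  classical
  let q : α → Quotient (SameCycle.setoid σ) := Quotient.mk _
  have hinv : ∀ c, q ((swap x (σ x) * σ) c) = q c := fun c =>
    (apply_swap_eq_self (v := q) (mk_sameCycle_apply σ x).symm _).trans (mk_sameCycle_apply σ c)
  let F : Quotient (SameCycle.setoid (swap x (σ x) * σ)) → Quotient (SameCycle.setoid σ) :=
    Quotient.lift q fun _ _ => SameCycle.apply_eq_of_forall_apply_eq hinv
  have hsurj : Surjective F := Quotient.ind fun a => ⟨Quotient.mk _ a, rfl⟩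
  -- `x` is a fixed point of `swap x (σ x) * σ`, so it is split off from `σ x`.
  have hninj : ¬ Injective F := fun hinj => by
    have hsame := Quotient.exact (hinj (mk_sameCycle_apply σ x).symm)
    exact hx (hsame.eq_of_left (swap_apply_right x (σ x))).symm
  have := Fintype.ofFinite α
  simpa only [numOrbits, Nat.card_eq_fintype_card] using
    Fintype.card_lt_of_surjective_not_injective F hsurj hninj

theorem numOrbits_add_numOrbits_mul_le [Fintype α] [DecidableEq α] (σ π : Perm α) :
    σ.numOrbits + (σ * π).numOrbits ≤ Fintype.card α + π.numOrbits := by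
  obtain hσ | ⟨x, hx⟩ := σ.support.eq_empty_or_nonempty
  · rw [support_eq_empty_iff.1 hσ, one_mul, ← Nat.card_eq_fintype_card]
    exact Nat.add_le_add_right (numOrbits_le_card 1) _
  · have hx : σ x ≠ x := mem_support.1 hx
    have ih := numOrbits_add_numOrbits_mul_le (swap x (σ x) * σ) π
    have hsplit := numOrbits_lt_numOrbits_swap_mul hx
    have hmerge := numOrbits_le_numOrbits_swap_mul_add_one (σ * π) x (σ x)
    rw [mul_assoc] at ih
    omega
termination_by σ.support.card
decreasing_by exact card_support_swap_mul hx

theorem numOrbits_finRotate_le_one (n : ℕ) : (finRotate n).numOrbits ≤ 1 := by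
  refine Finite.card_le_one_iff_subsingleton.2 ⟨fun o o' => ?_⟩
  induction o, o' using Quotient.inductionOn₂ with
  | h a b =>
    refine Quot.sound ?_
    rcases lt_or_ge n 2 with hn | hn
    · exact (Fin.ext (by omega) : a = b).sameCycle _
    · have hmem : ∀ c, finRotate n c ≠ c := fun c =>
        mem_support.1 (support_finRotate_of_le hn ▸ Finset.mem_univ c)
      exact (isCycle_finRotate_of_le hn).sameCycle (hmem a) (hmem b)

end Equiv.Perm

open Equiv.Perm in
theorem cycle_lemma_general (n : ℕ) (σ : Equiv.Perm (Fin n)) :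
    cycleCount σ + cycleCount (σ * finRotate n) ≤ n + 1 := by
  have hσ := cycleCount_le_numOrbits σ
  have hστ := cycleCount_le_numOrbits (σ * finRotate n)
  have hτ := numOrbits_finRotate_le_one n
  have key := numOrbits_add_numOrbits_mul_le σ (finRotate n)
  rw [Fintype.card_fin] at key
  omega

/-- **Cycle Lemma.** For every positive integer `n` and every permutation `σ ∈ S_n`,
`ξ(σ) + ξ(στ) ≤ n + 1`, where `τ = (1 2 ⋯ n)` is the canonical full cycle. -/
theorem cycle_lemma (n : ℕ) (hn : 0 < n) (σ : Equiv.Perm (Fin n)) :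
    cycleCount σ + cycleCount (σ * finRotate n) ≤ n + 1 :=
  cycle_lemma_general n σ
end

section
/- Let d_A ≤ d_B be positive integers. Define λ₁ = [d_A d_B + 1 + (d_A − 1)√((d_A+1)(d_A d_B+1))] / (d_A(d_A d_B + 1)) and λ₂ = ⋯ = λ_{d_A} = [d_A d_B + 1 − √((d_A+1)(d_A d_B+1))] / (d_A(d_A d_B + 1)). Then: (i) all λ_i are nonnegative and Σ_{i=1}^{d_A} λ_i = 1; (ii) Σ_{i=1}^{d_A} λ_i² = (d_A + d_B)/(d_A d_B + 1); (iii) if d_B ≥ d_A² then λ₁ < 2/d_A; and (iv) if d_B ≤ r·d_A for some real r > 0, then λ₁ ≥ (r d_A)^{−1/2}, and hence for every real α > 1 the Rényi-α entropy of the probability vector λ satisfies (1/(1−α)) log₂(Σ_{i=1}^{d_A} λ_i^α) ≤ (α/(2(α−1)))·(log₂ d_A + log₂ r). -/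
lemma sum_ite_succ (n : ℕ) (f : ℝ → ℝ) (x y : ℝ) :
    ∑ i : Fin (n+1), f (if (i : ℕ) = 0 then x else y) = f x + n * f y := by
  rw [Fin.sum_univ_succ]
  simp [Fin.val_succ]

lemma core_sqrt_bound (A B S : ℝ) (hA : 1 ≤ A) (hB : A ≤ B) (hS0 : 0 ≤ S)
    (hS2 : S ^ 2 = (A + 1) * (A * B + 1)) :
    A * (A * B + 1) ≤ (A * B + 1 + (A - 1) * S) * Real.sqrt B := by
  set T := Real.sqrt B with hT
  have hB0 : (0:ℝ) ≤ B := by linarith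
  have hT2 : T ^ 2 = B := Real.sq_sqrt hB0
  have hT1 : 1 ≤ T := by
    rw [hT, show (1:ℝ) = Real.sqrt 1 by simp]
    exact Real.sqrt_le_sqrt (by linarith)
  have hTA : A ≤ T ^ 2 := by rw [hT2]; exact hB
  have hSAT : A * T ≤ S := by
    have h : (A * T) ^ 2 ≤ S ^ 2 := by
      have e : (A * T) ^ 2 = A ^ 2 * B := by rw [mul_pow, hT2]
      nlinarith [mul_nonneg (by linarith : (0:ℝ) ≤ A) hB0]
    have h2 : (0:ℝ) < A * T + S := by nlinarith
    nlinarith [h, h2]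
  rw [← hT2]
  nlinarith [mul_nonneg (mul_nonneg (by linarith : (0:ℝ) ≤ A - 1) hS0) (by linarith : (0:ℝ) ≤ T - 1),
    mul_nonneg (by linarith : (0:ℝ) ≤ A - 1) (by linarith : (0:ℝ) ≤ T - 1),
    sq_nonneg (T - 1), sq_nonneg (A - T),
    mul_le_mul_of_nonneg_right hSAT
      (mul_nonneg (by linarith : (0:ℝ) ≤ A - 1) (by linarith : (0:ℝ) ≤ T))]

set_option maxHeartbeats 1000000 in
/-- The single-peak spectrum of the fiducial state of the constructed complex projective
2-design: one large eigenvalue `λ₁` and `d_A − 1` equal eigenvalues `λ₂`.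
(i) it is a probability vector; (ii) it satisfies the 2-design condition
`Σ λᵢ² = (d_A + d_B)/(d_A d_B + 1)`; (iii) if `d_B ≥ d_A²` then `λ₁ < 2/d_A`;
(iv) if `d_B ≤ r d_A` then `λ₁ ≥ (r d_A)^{−1/2}`, hence for every real `α > 1` the
Rényi-α entropy of the vector satisfies
`(1/(1−α)) log₂ (Σ λᵢ^α) ≤ (α/(2(α−1))) (log₂ d_A + log₂ r)`. -/
theorem gap_two_design_spectrum (dA dB : ℕ) (hdA : 0 < dA) (hdAB : dA ≤ dB)
    (lam1 lam2 : ℝ)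
    (h1 : lam1 = ((dA : ℝ) * dB + 1 + ((dA : ℝ) - 1) *
        Real.sqrt (((dA : ℝ) + 1) * ((dA : ℝ) * dB + 1))) / ((dA : ℝ) * ((dA : ℝ) * dB + 1)))
    (h2 : lam2 = ((dA : ℝ) * dB + 1 -
        Real.sqrt (((dA : ℝ) + 1) * ((dA : ℝ) * dB + 1))) / ((dA : ℝ) * ((dA : ℝ) * dB + 1)))
    (lam : Fin dA → ℝ) (hlam : lam = fun i : Fin dA => if (i : ℕ) = 0 then lam1 else lam2) :
    ((∀ i, 0 ≤ lam i) ∧ ∑ i, lam i = 1)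
    ∧ (∑ i, (lam i) ^ 2 = ((dA : ℝ) + dB) / ((dA : ℝ) * dB + 1))
    ∧ ((dA : ℝ) ^ 2 ≤ dB → lam1 < 2 / dA)
    ∧ (∀ r : ℝ, 0 < r → (dB : ℝ) ≤ r * dA →
        lam1 ≥ (r * dA) ^ (-(1 : ℝ) / 2)
        ∧ ∀ α : ℝ, 1 < α →
            (1 / (1 - α)) * Real.logb 2 (∑ i, lam i ^ α)
              ≤ α / (2 * (α - 1)) * (Real.logb 2 dA + Real.logb 2 r)) := by
  obtain ⟨n, rfl⟩ : ∃ n, dA = n + 1 := ⟨dA - 1, (Nat.succ_pred_eq_of_pos hdA).symm⟩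
  set A : ℝ := ((n:ℝ) + 1) with hAdef
  have hAcast : ((n + 1 : ℕ) : ℝ) = A := by push_cast [hAdef]; ring
  set B : ℝ := (dB : ℝ) with hBdef
  rw [hAcast] at h1 h2
  set S : ℝ := Real.sqrt ((A + 1) * (A * B + 1)) with hSdef
  have hA1 : 1 ≤ A := by simp [hAdef]
  have hn : (n : ℝ) = A - 1 := by rw [hAdef]; ring
  have hBA : A ≤ B := by rw [hBdef, ← hAcast]; exact_mod_cast hdAB
  have hB1 : 1 ≤ B := le_trans hA1 hBA
  have hD0 : 0 < A * (A * B + 1) := by positivity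
  have hAB0 : 0 < A * B + 1 := by positivity
  have hA0 : 0 < A := by positivity
  have hS0 : 0 ≤ S := Real.sqrt_nonneg _
  have hS2 : S ^ 2 = (A + 1) * (A * B + 1) := Real.sq_sqrt (by nlinarith)
  clear_value A B S
  clear hSdef hBdef hAdef
  have hSle : S ≤ A * B + 1 := by
    have hpos : 0 < S + (A * B + 1) := by nlinarith
    have hprod : 0 ≤ (A * B + 1) * (A * (B - 1)) :=
      mul_nonneg (by nlinarith) (mul_nonneg (by linarith) (by linarith))
    nlinarith [hpos, hprod]
  have hl1 : lam1 = (A * B + 1 + (A - 1) * S) / (A * (A * B + 1)) := by rw [h1]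
  have hl2 : lam2 = (A * B + 1 - S) / (A * (A * B + 1)) := by rw [h2]
  have hl2nn : 0 ≤ lam2 := by rw [hl2]; apply div_nonneg (by linarith) (le_of_lt hD0)
  have hl1nn : 0 ≤ lam1 := by
    rw [hl1]
    apply div_nonneg _ (le_of_lt hD0)
    nlinarith [mul_nonneg (by linarith : (0:ℝ) ≤ A - 1) hS0]
  refine ⟨⟨?_, ?_⟩, ?_, ?_, ?_⟩
  · intro i; rw [hlam]; dsimp only; split <;> assumption
  · rw [hlam, sum_ite_succ n (fun x => x) lam1 lam2, hl1, hl2, hn]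
    field_simp
    ring
  · rw [hAcast, hlam, sum_ite_succ n (fun x => x ^ 2) lam1 lam2, hl1, hl2, hn, div_pow, div_pow,
      ← mul_div_assoc, ← add_div, div_eq_div_iff (ne_of_gt (by positivity)) (ne_of_gt hAB0)]
    linear_combination A * (A - 1) * (A * B + 1) * hS2
  · -- (iii)
    intro hB2
    rw [hAcast] at hB2 ⊢
    rw [hl1, div_lt_div_iff₀ hD0 (by linarith : (0:ℝ) < A)]
    have key : (A - 1) * S < A * B + 1 := by
      nlinarith [mul_nonneg (by linarith : (0:ℝ) ≤ A - 1) hS0,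
        sq_nonneg ((A - 1) * S - (A * B + 1))]
    nlinarith
  · intro r hr hrb
    rw [hAcast] at hrb ⊢
    have hrA0 : 0 < r * A := by nlinarith
    have hrA1 : B ≤ r * A := hrb
    have hsq : Real.sqrt B ≤ Real.sqrt (r * A) := Real.sqrt_le_sqrt hrb
    have hsqB0 : 0 < Real.sqrt B := Real.sqrt_pos.mpr (by linarith)
    have hsqrA0 : 0 < Real.sqrt (r * A) := Real.sqrt_pos.mpr hrA0
    have hmain : 1 / Real.sqrt B ≤ lam1 := by
      rw [hl1, div_le_div_iff₀ hsqB0 hD0, one_mul]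
      exact core_sqrt_bound A B S hA1 hBA hS0 hS2
    have hrpow : (r * A) ^ (-(1:ℝ)/2) = 1 / Real.sqrt (r * A) := by
      rw [Real.sqrt_eq_rpow, show (-(1:ℝ)/2) = -(1/2) by ring,
        Real.rpow_neg (le_of_lt hrA0)]
      exact (one_div _).symm
    have hlam1ge : (r * A) ^ (-(1:ℝ)/2) ≤ lam1 := by
      rw [hrpow]
      exact le_trans (one_div_le_one_div_of_le hsqB0 hsq) hmain
    refine ⟨hlam1ge, ?_⟩
    intro α hα
    have hlam10 : 0 < lam1 := lt_of_lt_of_le (by positivity) hlam1ge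
    -- sum ≥ lam1 ^ α
    have hsum_ge : lam1 ^ α ≤ ∑ i, lam i ^ α := by
      rw [hlam, sum_ite_succ n (fun x => x ^ α) lam1 lam2]
      have : 0 ≤ (n : ℝ) * lam2 ^ α :=
        mul_nonneg (by positivity) (Real.rpow_nonneg hl2nn α)
      linarith
    have hbase : (r * A) ^ (-(α/2)) ≤ lam1 ^ α := by
      calc (r * A) ^ (-(α/2)) = ((r * A) ^ (-(1:ℝ)/2)) ^ α := by
            rw [← Real.rpow_mul (le_of_lt hrA0), show (-(1:ℝ)/2) * α = -(α/2) by ring]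
        _ ≤ lam1 ^ α := Real.rpow_le_rpow (Real.rpow_nonneg (le_of_lt hrA0) _) hlam1ge
            (by linarith)
    have hsum_pos : (0:ℝ) < ∑ i, lam i ^ α :=
      lt_of_lt_of_le (Real.rpow_pos_of_pos hlam10 α) hsum_ge
    have hlog : Real.logb 2 ((r * A) ^ (-(α/2))) ≤ Real.logb 2 (∑ i, lam i ^ α) :=
      Real.logb_le_logb_of_le (by norm_num) (Real.rpow_pos_of_pos hrA0 _) (le_trans hbase hsum_ge)
    have hlogval : Real.logb 2 ((r * A) ^ (-(α/2))) = -(α/2) * Real.logb 2 (r * A) := by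
      rw [Real.logb, Real.log_rpow hrA0, Real.logb]; ring
    have hlogmul : Real.logb 2 (r * A) = Real.logb 2 r + Real.logb 2 A := by
      rw [Real.logb, Real.log_mul (ne_of_gt hr) (by positivity), Real.logb, Real.logb]; ring
    have h1α : 1 / (1 - α) < 0 := by
      apply div_neg_of_pos_of_neg one_pos; linarith
    have := mul_le_mul_of_nonpos_left hlog (le_of_lt h1α)
    calc (1 / (1 - α)) * Real.logb 2 (∑ i, lam i ^ α)
        ≤ (1 / (1 - α)) * Real.logb 2 ((r * A) ^ (-(α/2))) := this
      _ = α / (2 * (α - 1)) * (Real.logb 2 A + Real.logb 2 r) := by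
          rw [hlogval, hlogmul]
          have : (1 - α) ≠ 0 := by linarith
          have : (α - 1) ≠ 0 := by linarith
          field_simp
          ring
end

section
/- For every integer k ≥ 1, the k-th Catalan number satisfies 4^k/(√π · (k+1)^{3/2}) < Cat_k < 4^k/(√π · k^{3/2}). -/
/-!
The partial Wallis products `W k = 16^k / (C(2k,k)^2 (2k+1))` satisfy the effective bounds
`(2k+1)/(2k+2) · π/2 ≤ W k ≤ π/2` (comparison of `∫ sin^(2k+1)` and `∫ sin^(2k)`), which pin
`C(2k,k)^2` between `16^k / (π (k + 1/2))` and `16^k (k+1) / (π (k + 1/2)^2)`. Dividing by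
`(k+1)^2` gives `Cat_k^2` strictly between `16^k / (π (k+1)^3)` and `16^k / (π k^3)`.
-/

open scoped Real

/-- The `n`-th Catalan number `Cat_n = (2n)!/(n!(n+1)!)`, as a real number. -/
noncomputable def catalanR (n : ℕ) : ℝ :=
  ((2 * n).factorial : ℝ) / ((n.factorial : ℝ) * ((n + 1).factorial : ℝ))

open Nat Real

theorem Nat.centralBinom_mul_factorial_mul_factorial (n : ℕ) :
    n.centralBinom * n ! * n ! = (2 * n)! := by
  simpa [centralBinom_eq_two_mul_choose, two_mul] using
    choose_mul_factorial_mul_factorial (n := 2 * n) (k := n) (by omega)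

theorem Real.Wallis.W_eq_centralBinom (n : ℕ) :
    Wallis.W n = (4 ^ n) ^ 2 / ((n.centralBinom : ℝ) ^ 2 * (2 * n + 1)) := by
  have h16 : (2 : ℝ) ^ (4 * n) = (4 ^ n) ^ 2 := by
    rw [← pow_mul, show (4 : ℝ) = 2 ^ 2 by norm_num, ← pow_mul]; ring_nf
  have hfac : (n ! : ℝ) ≠ 0 := by positivity
  rw [Wallis.W_eq_factorial_ratio, h16, ← n.centralBinom_mul_factorial_mul_factorial]
  push_cast
  field_simp

theorem two_mul_four_pow_sq_le_pi_mul_centralBinom_sq (n : ℕ) :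
    2 * (4 ^ n) ^ 2 ≤ π * (2 * n + 1) * (n.centralBinom : ℝ) ^ 2 := by
  have hc : (0 : ℝ) < n.centralBinom := by exact_mod_cast n.centralBinom_pos
  have h := Wallis.W_le n
  rw [Wallis.W_eq_centralBinom, div_le_iff₀ (by positivity)] at h
  linarith

theorem pi_mul_centralBinom_sq_le (n : ℕ) :
    π * (2 * n + 1) ^ 2 * (n.centralBinom : ℝ) ^ 2 ≤ 4 * (n + 1) * (4 ^ n) ^ 2 := by
  have hc : (0 : ℝ) < n.centralBinom := by exact_mod_cast n.centralBinom_pos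
  have h := Wallis.le_W n
  rw [Wallis.W_eq_centralBinom, le_div_iff₀ (by positivity)] at h
  have : (2 * n + 2 : ℝ) ≠ 0 := by positivity
  field_simp at h
  linarith

theorem catalanR_eq_centralBinom_div (n : ℕ) : catalanR n = n.centralBinom / (n + 1) := by
  have hfac : (n ! : ℝ) ≠ 0 := by positivity
  rw [catalanR, ← n.centralBinom_mul_factorial_mul_factorial, factorial_succ]
  push_cast
  field_simp

theorem four_pow_sq_div_lt_catalanR_sq (n : ℕ) :
    (4 ^ n) ^ 2 / (π * (n + 1) ^ 3) < catalanR n ^ 2 := by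
  have hc : (0 : ℝ) < n.centralBinom := by exact_mod_cast n.centralBinom_pos
  have h := two_mul_four_pow_sq_le_pi_mul_centralBinom_sq n
  rw [catalanR_eq_centralBinom_div, div_pow, div_lt_div_iff₀ (by positivity) (by positivity)]
  nlinarith [mul_le_mul_of_nonneg_right h (sq_nonneg ((n : ℝ) + 1)),
    mul_pos (mul_pos pi_pos (pow_pos hc 2)) (pow_pos (by positivity : (0 : ℝ) < n + 1) 2)]

theorem catalanR_sq_lt_four_pow_sq_div {n : ℕ} (hn : 0 < n) :
    catalanR n ^ 2 < (4 ^ n) ^ 2 / (π * n ^ 3) := by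
  have hn' : (0 : ℝ) < n := by exact_mod_cast hn
  have h := pi_mul_centralBinom_sq_le n
  have hcubic : 4 * (n : ℝ) ^ 3 < (n + 1) * (2 * n + 1) ^ 2 := by nlinarith
  rw [catalanR_eq_centralBinom_div, div_pow, div_lt_div_iff₀ (by positivity) (by positivity)]
  refine lt_of_mul_lt_mul_right ?_ (sq_nonneg (2 * (n : ℝ) + 1))
  nlinarith [mul_le_mul_of_nonneg_right h (pow_nonneg hn'.le 3),
    mul_lt_mul_of_pos_right hcubic (by positivity : (0 : ℝ) < (n + 1) * (4 ^ n) ^ 2)]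

theorem div_sqrt_pi_mul_rpow_three_halves {a x : ℝ} (ha : 0 ≤ a) (hx : 0 ≤ x) :
    a / (√π * x ^ (3 / 2 : ℝ)) = √(a ^ 2 / (π * x ^ 3)) := by
  have hx32 : x ^ (3 / 2 : ℝ) = √(x ^ 3) := by
    rw [sqrt_eq_rpow, ← rpow_natCast_mul hx]; norm_num
  rw [hx32, sqrt_div (sq_nonneg a), sqrt_sq ha, sqrt_mul pi_pos.le]

/-- For every integer `k ≥ 1`, the `k`-th Catalan number satisfies
`4^k/(√π (k+1)^{3/2}) < Cat_k < 4^k/(√π k^{3/2})`. -/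
theorem catalan_bounds (k : ℕ) (hk : 1 ≤ k) :
    4 ^ k / (Real.sqrt π * ((k : ℝ) + 1) ^ ((3 : ℝ) / 2)) < catalanR k
    ∧ catalanR k < 4 ^ k / (Real.sqrt π * (k : ℝ) ^ ((3 : ℝ) / 2)) := by
  have hCat : 0 < catalanR k := by rw [catalanR]; positivity
  rw [div_sqrt_pi_mul_rpow_three_halves (by positivity) (by positivity),
    div_sqrt_pi_mul_rpow_three_halves (by positivity) (by positivity),
    sqrt_lt' hCat, lt_sqrt hCat.le]
  exact ⟨four_pow_sq_div_lt_catalanR_sq k, catalanR_sq_lt_four_pow_sq_div hk⟩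
end

section
/- Let σ be a permutation in the symmetric group S_n with disjoint cycle decomposition into nontrivial cycles of lengths ℓ₁,…,ℓ_k (each ℓ_i ≥ 2), let |σ| = Σ_{i=1}^k (ℓ_i − 1) (the minimal number of transpositions whose product is σ), and define the absolute Möbius weight |Moeb(σ)| = Π_{i=1}^k Cat_{ℓ_i − 1}. If |σ| ≥ 1, then 1 ≤ |Moeb(σ)| ≤ Cat_{|σ|} < 4^{|σ|}/(√π · |σ|^{3/2}). Moreover, the lower bound 1 is attained if and only if σ is a product of disjoint transpositions, and the bound |Moeb(σ)| ≤ Cat_{|σ|} is attained if and only if σ is a single cycle of length |σ|+1. -/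
/-!
Write `m = ℓ - 1` for the cycle lengths, so `|Moeb(σ)| = ∏ Cat_{mᵢ}` and `|σ| = ∑ mᵢ` with all
`mᵢ ≥ 1`. The Catalan numbers are strictly supermultiplicative on positive arguments,
`Cat_a Cat_b < Cat_{a+b}`: in the convolution `Cat_{a+b} = ∑_{i < a+b} Cat_i Cat_{a+b-1-i}`, the
terms with `i ≥ a` already dominate `Cat_a Cat_b` by induction and the terms with `i < a` are
positive. This gives the upper bound with equality exactly for a single cycle, and
`Cat_m = 1 ↔ m ≤ 1` gives the lower bound with its equality case. The asymptotic bound follows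
from Wallis' inequality `W_m ≥ (2m+1)/(2m+2) · π/2`, since `W_m = 16^m / (binom(2m,m)² (2m+1))`
and `binom(2m,m) = (m+1) Cat_m`.
-/

open scoped Real

/-- The `n`-th Catalan number `Cat_n = (2n)!/(n!(n+1)!)`. -/
def cat (n : ℕ) : ℕ := (2 * n).factorial / (n.factorial * (n + 1).factorial)

/-- `|σ| = Σᵢ (ℓᵢ − 1)`, where `ℓ₁, …, ℓ_k` are the lengths of the nontrivial disjoint
cycles of `σ`; this is the minimal number of transpositions whose product is `σ`. -/
def permLength {n : ℕ} (σ : Equiv.Perm (Fin n)) : ℕ :=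
  (σ.cycleType.map fun ℓ => ℓ - 1).sum

/-- The absolute Möbius weight `|Moeb(σ)| = Πᵢ Cat_{ℓᵢ − 1}`, the product over the
nontrivial disjoint cycles of `σ` of the Catalan numbers of their lengths minus one. -/
def moebAbs {n : ℕ} (σ : Equiv.Perm (Fin n)) : ℕ :=
  (σ.cycleType.map fun ℓ => cat (ℓ - 1)).prod

open Finset Real

theorem cat_eq_catalan (n : ℕ) : cat n = catalan n := by
  rw [cat, catalan_eq_centralBinom_div, Nat.centralBinom_eq_two_mul_choose,
    Nat.choose_eq_factorial_div_factorial (by omega), Nat.div_div_eq_div_mul,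
    Nat.two_mul, Nat.add_sub_cancel, Nat.factorial_succ]
  ring_nf

theorem catalan_pos (n : ℕ) : 0 < catalan n := by
  rw [catalan_eq_centralBinom_div]
  exact Nat.div_pos (Nat.le_of_dvd n.centralBinom_pos n.succ_dvd_centralBinom) n.succ_pos

theorem catalan_add_add_one (m n : ℕ) :
    catalan (m + n + 1) = ∑ i ∈ range m, catalan i * catalan (m + n - i)
      + ∑ i ∈ range (n + 1), catalan (m + i) * catalan (n - i) := by
  rw [catalan_succ, Fin.sum_univ_eq_sum_range (fun i => catalan i * catalan (m + n - i)),
    Nat.succ_eq_add_one, add_assoc, sum_range_add]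
  simp only [Nat.add_sub_add_left]

theorem catalan_mul_succ_le_sum {m n : ℕ}
    (h : ∀ i ≤ n, catalan m * catalan i ≤ catalan (m + i)) :
    catalan m * catalan (n + 1) ≤ ∑ i ∈ range (n + 1), catalan (m + i) * catalan (n - i) := by
  rw [catalan_succ, Fin.sum_univ_eq_sum_range (fun i => catalan i * catalan (n - i)), mul_sum]
  refine sum_le_sum fun i hi => ?_
  rw [← mul_assoc]
  exact Nat.mul_le_mul_right _ (h i (by simpa [Nat.lt_succ_iff] using hi))

theorem catalan_mul_le_catalan_add (m n : ℕ) : catalan m * catalan n ≤ catalan (m + n) := by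
  induction n using Nat.strong_induction_on with
  | _ n ih =>
    rcases n with _ | n
    · simp
    calc catalan m * catalan (n + 1)
        ≤ ∑ i ∈ range (n + 1), catalan (m + i) * catalan (n - i) :=
          catalan_mul_succ_le_sum fun i hi => ih i (by omega)
      _ ≤ catalan (m + (n + 1)) := by rw [← add_assoc, catalan_add_add_one]; omega

theorem catalan_mul_lt_catalan_add {m n : ℕ} (hm : m ≠ 0) (hn : n ≠ 0) :
    catalan m * catalan n < catalan (m + n) := by
  obtain ⟨n, rfl⟩ := Nat.exists_eq_succ_of_ne_zero hn
  have hfirst : 0 < ∑ i ∈ range m, catalan i * catalan (m + n - i) :=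
    sum_pos (fun i _ => Nat.mul_pos (catalan_pos _) (catalan_pos _)) (nonempty_range_iff.2 hm)
  calc catalan m * catalan (n + 1)
      ≤ ∑ i ∈ range (n + 1), catalan (m + i) * catalan (n - i) :=
        catalan_mul_succ_le_sum fun i _ => catalan_mul_le_catalan_add m i
    _ < catalan (m + (n + 1)) := by rw [← add_assoc, catalan_add_add_one]; omega

theorem catalan_eq_one_iff {n : ℕ} : catalan n = 1 ↔ n ≤ 1 := by
  refine ⟨fun h => ?_, fun h => by interval_cases n <;> simp [catalan_one]⟩
  by_contra! hn
  have := catalan_mul_lt_catalan_add (m := 1) (n := n - 1) one_ne_zero (by omega)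
  rw [catalan_one, one_mul, Nat.add_sub_cancel' (by omega), h] at this
  exact (catalan_pos (n - 1)).ne' (by omega)

theorem Real.Wallis.W_mul_centralBinom_sq (n : ℕ) :
    Wallis.W n * ((n.centralBinom : ℝ) ^ 2 * (2 * n + 1)) = 16 ^ n := by
  have hfact : ((2 * n).factorial : ℝ) = n.centralBinom * (n.factorial * n.factorial) := by
    have h := Nat.choose_mul_factorial_mul_factorial (show n ≤ 2 * n by omega)
    rw [show 2 * n - n = n by omega, ← Nat.centralBinom_eq_two_mul_choose, mul_assoc] at h
    exact_mod_cast h.symm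
  rw [Wallis.W_eq_factorial_ratio, hfact, pow_mul, show (2 : ℝ) ^ 4 = 16 by norm_num]
  field_simp [n.centralBinom_ne_zero]

theorem Nat.centralBinom_sq_mul_pi_mul_lt (n : ℕ) :
    (n.centralBinom : ℝ) ^ 2 * (π * n) < 16 ^ n := by
  have hWallis : (n.centralBinom : ℝ) ^ 2 * π * (2 * n + 1) ^ 2 ≤ 4 * (n + 1) * 16 ^ n := by
    have h := mul_le_mul_of_nonneg_right (Wallis.le_W n)
      (by positivity : (0 : ℝ) ≤ (n.centralBinom : ℝ) ^ 2 * (2 * n + 1))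
    rw [Wallis.W_mul_centralBinom_sq] at h
    field_simp at h
    linarith
  have h16 : (0 : ℝ) < 16 ^ n := by positivity
  refine lt_of_mul_lt_mul_right (a := ((2 : ℝ) * n + 1) ^ 2) ?_ (by positivity)
  calc (n.centralBinom : ℝ) ^ 2 * (π * n) * (2 * n + 1) ^ 2
      = (n : ℝ) * ((n.centralBinom : ℝ) ^ 2 * π * (2 * n + 1) ^ 2) := by ring
    _ ≤ (n : ℝ) * (4 * (n + 1) * 16 ^ n) := by gcongr
    _ < 16 ^ n * (2 * n + 1) ^ 2 := by nlinarith -- 4n(n+1) < (2n+1)²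

theorem catalan_lt_four_pow_div {n : ℕ} (hn : n ≠ 0) :
    (catalan n : ℝ) < 4 ^ n / (√π * (n : ℝ) ^ ((3 : ℝ) / 2)) := by
  have hn' : (0 : ℝ) < n := by positivity
  rw [lt_div_iff₀ (by positivity)]
  refine lt_of_pow_lt_pow_left₀ 2 (by positivity) ?_
  have hpow : ((n : ℝ) ^ ((3 : ℝ) / 2)) ^ 2 = (n : ℝ) ^ 3 := by
    rw [← Real.rpow_mul_natCast hn'.le]; norm_num
  have hfour : ((4 : ℝ) ^ n) ^ 2 = 16 ^ n := by rw [← pow_mul, mul_comm, pow_mul]; norm_num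
  have hcentral : ((n + 1 : ℕ) : ℝ) * catalan n = n.centralBinom := by
    exact_mod_cast succ_mul_catalan_eq_centralBinom n
  rw [mul_pow, mul_pow, Real.sq_sqrt pi_pos.le, hpow, hfour]
  calc (catalan n : ℝ) ^ 2 * (π * n ^ 3) ≤ (n.centralBinom : ℝ) ^ 2 * (π * n) := by
        rw [← hcentral]
        push_cast
        have : (0 : ℝ) ≤ catalan n ^ 2 * π * n := by positivity
        nlinarith
    _ < 16 ^ n := Nat.centralBinom_sq_mul_pi_mul_lt n

namespace Multiset

theorem prod_map_catalan_pos (s : Multiset ℕ) : 0 < (s.map catalan).prod :=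
  prod_pos fun x hx => by
    obtain ⟨y, -, rfl⟩ := mem_map.1 hx
    exact catalan_pos y

theorem prod_map_catalan_le_catalan_sum (s : Multiset ℕ) :
    (s.map catalan).prod ≤ catalan s.sum := by
  induction s using Multiset.induction with
  | empty => simp
  | cons a s ih =>
    rw [map_cons, prod_cons, sum_cons]
    exact (Nat.mul_le_mul_left _ ih).trans (catalan_mul_le_catalan_add a s.sum)

theorem prod_map_catalan_eq_catalan_sum_iff {s : Multiset ℕ} (hs : ∀ x ∈ s, x ≠ 0) :
    (s.map catalan).prod = catalan s.sum ↔ card s ≤ 1 := by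
  refine ⟨fun h => ?_, fun h => ?_⟩
  · by_contra! hcard
    obtain ⟨a, ha⟩ := card_pos_iff_exists_mem.1 (by omega : 0 < card s)
    obtain ⟨t, rfl⟩ := exists_cons_of_mem ha
    obtain ⟨b, hb⟩ := card_pos_iff_exists_mem.1 (by simpa using hcard : 0 < card t)
    have ht : t.sum ≠ 0 := by
      have := le_sum_of_mem hb
      have := hs b (mem_cons_of_mem hb)
      omega
    rw [map_cons, prod_cons, sum_cons] at h
    have := (Nat.mul_le_mul_left (catalan a) (prod_map_catalan_le_catalan_sum t)).trans_lt
      (catalan_mul_lt_catalan_add (hs a (mem_cons_self a t)) ht)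
    omega
  · rcases Nat.le_one_iff_eq_zero_or_eq_one.1 h with h | h
    · simp [card_eq_zero.1 h]
    · obtain ⟨a, rfl⟩ := card_eq_one.1 h
      simp

theorem prod_map_catalan_eq_one_iff {s : Multiset ℕ} :
    (s.map catalan).prod = 1 ↔ ∀ x ∈ s, x ≤ 1 := by
  refine ⟨fun h x hx => ?_, fun h => prod_eq_one ?_⟩
  · refine catalan_eq_one_iff.1 (all_one_of_le_one_le_of_prod_eq_one ?_ h _ (mem_map_of_mem _ hx))
    simp only [mem_map, forall_exists_index, and_imp, forall_apply_eq_imp_iff₂]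
    exact fun y _ => catalan_pos y
  · simp only [mem_map, forall_exists_index, and_imp, forall_apply_eq_imp_iff₂]
    exact fun y hy => catalan_eq_one_iff.2 (h y hy)

end Multiset

section Perm

variable {n : ℕ} (σ : Equiv.Perm (Fin n))

theorem moebAbs_eq_prod_map_catalan :
    moebAbs σ = ((σ.cycleType.map (· - 1)).map catalan).prod := by
  simp only [moebAbs, Multiset.map_map, Function.comp_def, cat_eq_catalan]

theorem ne_zero_of_mem_map_cycleType_sub_one : ∀ x ∈ σ.cycleType.map (· - 1), x ≠ 0 := by
  simp only [Multiset.mem_map, forall_exists_index, and_imp, forall_apply_eq_imp_iff₂]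
  intro ℓ hℓ
  have := σ.two_le_of_mem_cycleType hℓ
  omega

theorem moebAbs_eq_one_iff : moebAbs σ = 1 ↔ ∀ ℓ ∈ σ.cycleType, ℓ = 2 := by
  rw [moebAbs_eq_prod_map_catalan, Multiset.prod_map_catalan_eq_one_iff]
  simp only [Multiset.mem_map, forall_exists_index, and_imp, forall_apply_eq_imp_iff₂]
  refine forall₂_congr fun ℓ hℓ => ?_
  have := σ.two_le_of_mem_cycleType hℓ
  omega

theorem card_cycleType_le_one_iff (hσ : 1 ≤ permLength σ) :
    Multiset.card σ.cycleType ≤ 1 ↔ σ.cycleType = {permLength σ + 1} := by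
  refine ⟨fun h => ?_, fun h => by simp [h]⟩
  rcases Nat.le_one_iff_eq_zero_or_eq_one.1 h with h | h
  · simp [permLength, Multiset.card_eq_zero.1 h] at hσ
  · obtain ⟨ℓ, hℓ⟩ := Multiset.card_eq_one.1 h
    have h2 := σ.two_le_of_mem_cycleType (hℓ ▸ Multiset.mem_singleton_self ℓ)
    rw [hℓ, permLength, hℓ, Multiset.map_singleton, Multiset.sum_singleton,
      Nat.sub_add_cancel (by omega)]

theorem moebAbs_eq_cat_permLength_iff (hσ : 1 ≤ permLength σ) :
    moebAbs σ = cat (permLength σ) ↔ σ.cycleType = {permLength σ + 1} := by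
  rw [moebAbs_eq_prod_map_catalan, cat_eq_catalan, ← card_cycleType_le_one_iff σ hσ,
    ← Multiset.card_map (· - 1)]
  exact Multiset.prod_map_catalan_eq_catalan_sum_iff (ne_zero_of_mem_map_cycleType_sub_one σ)

end Perm

/-- If `|σ| ≥ 1` then `1 ≤ |Moeb(σ)| ≤ Cat_{|σ|} < 4^{|σ|}/(√π |σ|^{3/2})`; the lower bound
is attained iff `σ` is a product of disjoint transpositions (all cycle lengths equal `2`),
and `|Moeb(σ)| = Cat_{|σ|}` iff `σ` is a single cycle of length `|σ| + 1`. -/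
theorem moebius_bounds {n : ℕ} (σ : Equiv.Perm (Fin n)) (hσ : 1 ≤ permLength σ) :
    1 ≤ moebAbs σ
    ∧ moebAbs σ ≤ cat (permLength σ)
    ∧ (cat (permLength σ) : ℝ)
        < 4 ^ permLength σ / (Real.sqrt π * (permLength σ : ℝ) ^ ((3 : ℝ) / 2))
    ∧ (moebAbs σ = 1 ↔ ∀ ℓ ∈ σ.cycleType, ℓ = 2)
    ∧ (moebAbs σ = cat (permLength σ) ↔ σ.cycleType = {permLength σ + 1}) := by
  refine ⟨?_, ?_, ?_, moebAbs_eq_one_iff σ, moebAbs_eq_cat_permLength_iff σ hσ⟩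
  · rw [moebAbs_eq_prod_map_catalan]
    exact Multiset.prod_map_catalan_pos _
  · rw [moebAbs_eq_prod_map_catalan, cat_eq_catalan]
    exact Multiset.prod_map_catalan_le_catalan_sum _
  · rw [cat_eq_catalan]
    exact catalan_lt_four_pow_div (by omega)
end

section
/- Weak subadditivity of Rényi entropies: let d_A and d_B be positive integers and let ρ_{AB} be a positive semidefinite matrix with trace 1 indexed by the product {1,…,d_A} × {1,…,d_B}, with reduced matrix ρ_A obtained by partial trace over the second factor. Then for every real α ≥ 0 with α ≠ 1, S_R^{(α)}(ρ_{AB}) ≤ S_R^{(α)}(ρ_A) + log₂ d_B; equivalently, log₂(d_A d_B) − S_R^{(α)}(ρ_{AB}) ≥ log₂ d_A − S_R^{(α)}(ρ_A). -/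
/-!
Let `U` diagonalize `ρ_AB` and `V` diagonalize `ρ_A`. In the basis `V ⊗ 1` the diagonal of
`ρ_AB` is `D λ` for the doubly stochastic matrix `D = |(V ⊗ 1)* U|²` (Schur), and its partial
sums over the `B` index are the eigenvalues `μ` of `ρ_A`. For every concave `g` on `[0, ∞)`,
Jensen's inequality along the rows of `D` and then over the `d_B` entries of each block gives
`∑ g(λ) ≤ d_B ∑ g(μ / d_B)`. For `g t = t^α / (1 - α)`, which is concave both for `α < 1` and for
`α > 1`, this reads `∑ λ^α / (1 - α) ≤ d_B^{1-α} ∑ μ^α / (1 - α)`; taking `log₂` (monotone, and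
compatible with the sign of `1 - α`) yields the claim.
-/

open scoped Classical ComplexOrder

/-- The Rényi-α entropy of a (Hermitian) matrix `ρ` with eigenvalues `λᵢ`:
`S_R^{(α)}(ρ) = (1/(1−α)) log₂ (Σᵢ λᵢ^α)` (junk value `0` if `ρ` is not Hermitian). -/
noncomputable def renyiEntropy {m : Type*} [Fintype m] [DecidableEq m]
    (α : ℝ) (ρ : Matrix m m ℂ) : ℝ :=
  if h : ρ.IsHermitian then
    (1 / (1 - α)) * Real.logb 2 (∑ i, h.eigenvalues i ^ α)
  else 0

/-- The partial trace over the second tensor factor. -/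
noncomputable def ptraceB {dA dB : ℕ}
    (ρ : Matrix (Fin dA × Fin dB) (Fin dA × Fin dB) ℂ) : Matrix (Fin dA) (Fin dA) ℂ :=
  Matrix.of fun i i' => ∑ j : Fin dB, ρ (i, j) (i', j)

open Matrix
open scoped Kronecker

namespace Matrix

variable {𝕜 n : Type*} [RCLike 𝕜] [Fintype n] [DecidableEq n]

theorem of_norm_sq_mem_doublyStochastic {U : Matrix n n 𝕜} (hU : U ∈ unitaryGroup n 𝕜) :
    of (fun i j => ‖U i j‖ ^ 2) ∈ doublyStochastic ℝ n := by
  refine mem_doublyStochastic_iff_sum.mpr ⟨fun _ _ => sq_nonneg _, fun i => ?_, fun j => ?_⟩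
  · have h := congr_fun₂ (mem_unitaryGroup_iff.mp hU) i i
    simp only [mul_apply, star_apply, RCLike.star_def, RCLike.mul_conj, one_apply_eq] at h
    exact_mod_cast h
  · have h := congr_fun₂ (mem_unitaryGroup_iff'.mp hU) j j
    simp only [mul_apply, star_apply, RCLike.star_def, mul_comm (starRingEnd 𝕜 _),
      RCLike.mul_conj, one_apply_eq] at h
    exact_mod_cast h

theorem IsHermitian.exists_doublyStochastic_conj_diag_eq_mulVec_eigenvalues
    {A : Matrix n n 𝕜} (hA : A.IsHermitian) {W : Matrix n n 𝕜} (hW : W ∈ unitaryGroup n 𝕜) :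
    ∃ D ∈ doublyStochastic ℝ n, ∀ p, (star W * A * W) p p = ((D *ᵥ hA.eigenvalues) p : 𝕜) := by
  set M := star W * (hA.eigenvectorUnitary : Matrix n n 𝕜)
  have hM : M ∈ unitaryGroup n 𝕜 := mul_mem (Unitary.star_mem hW) hA.eigenvectorUnitary.2
  refine ⟨_, of_norm_sq_mem_doublyStochastic hM, fun p => ?_⟩
  have hconj : star W * A * W = M * diagonal (RCLike.ofReal ∘ hA.eigenvalues) * star M := by
    conv_lhs => rw [hA.spectral_theorem]
    simp only [M, Unitary.conjStarAlgAut_apply, star_mul, star_star, Matrix.mul_assoc]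
  rw [hconj, mul_apply]
  simp only [mulVec, dotProduct, of_apply, mul_diagonal, star_apply, Function.comp_apply,
    RCLike.ofReal_sum, RCLike.ofReal_mul, RCLike.ofReal_pow]
  refine Finset.sum_congr rfl fun q _ => ?_
  rw [RCLike.star_def, ← RCLike.mul_conj]
  ring

theorem IsHermitian.sum_eigenvalues_eq_one {A : Matrix n n 𝕜} (hA : A.IsHermitian)
    (htr : A.trace = 1) : ∑ i, hA.eigenvalues i = 1 := by
  simpa [htr, eq_comm] using congrArg RCLike.re hA.trace_eq_sum_eigenvalues

end Matrix

section Jensen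

variable {n : Type*} [Fintype n] {s : Set ℝ} {g : ℝ → ℝ}

theorem ConcaveOn.sum_le_sum_map_mulVec [DecidableEq n] (hg : ConcaveOn ℝ s g)
    {D : Matrix n n ℝ} (hD : D ∈ doublyStochastic ℝ n) {x : n → ℝ} (hx : ∀ i, x i ∈ s) :
    ∑ j, g (x j) ≤ ∑ i, g ((D *ᵥ x) i) := calc
  ∑ j, g (x j) = ∑ i, ∑ j, D i j • g (x j) := by
    rw [Finset.sum_comm]
    simp_rw [← Finset.sum_smul, sum_col_of_mem_doublyStochastic hD, one_smul]
  _ ≤ ∑ i, g ((D *ᵥ x) i) := Finset.sum_le_sum fun i _ =>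
    hg.le_map_sum (fun j _ => nonneg_of_mem_doublyStochastic hD)
      (sum_row_of_mem_doublyStochastic hD i) (fun j _ => hx j)

theorem ConcaveOn.sum_le_card_mul_map_average [Nonempty n] (hg : ConcaveOn ℝ s g) {x : n → ℝ}
    (hx : ∀ i, x i ∈ s) :
    ∑ i, g (x i) ≤ Fintype.card n * g ((∑ i, x i) / Fintype.card n) := by
  have hn : (0 : ℝ) < Fintype.card n := by exact_mod_cast Fintype.card_pos
  have h := hg.le_map_sum (t := Finset.univ) (w := fun _ => (Fintype.card n : ℝ)⁻¹)
    (fun _ _ => by positivity) (by simp [Finset.card_univ, hn.ne']) (fun i _ => hx i)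
  simp only [smul_eq_mul, ← Finset.mul_sum] at h
  rwa [inv_mul_eq_div, inv_mul_eq_div, div_le_iff₀' hn] at h

end Jensen

theorem concaveOn_rpow_div_one_sub {α : ℝ} (hα : 0 ≤ α) :
    ConcaveOn ℝ (Set.Ici 0) fun t : ℝ => t ^ α / (1 - α) := by
  rcases le_or_gt α 1 with hα1 | hα1
  · simpa only [div_eq_inv_mul, smul_eq_mul] using
      (Real.concaveOn_rpow hα hα1).smul (inv_nonneg.mpr (sub_nonneg.mpr hα1))
  · refine ((convexOn_rpow hα1.le).neg.smul (inv_nonneg.mpr (sub_pos.mpr hα1).le)).congr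
      fun t _ => ?_
    simp only [Pi.neg_apply, smul_eq_mul, ← neg_sub α 1, div_neg, inv_mul_eq_div, neg_div]

theorem sum_rpow_pos {ι : Type*} [Fintype ι] {p : ι → ℝ} (hp : ∀ i, 0 ≤ p i)
    (hsum : ∑ i, p i = 1) (α : ℝ) : 0 < ∑ i, p i ^ α := by
  obtain ⟨i, hi⟩ : ∃ i, 0 < p i := by
    by_contra! h
    simp [le_antisymm (Finset.sum_nonpos fun i _ => h i) (Finset.sum_nonneg fun i _ => hp i)]
      at hsum
  exact (Real.rpow_pos_of_pos hi α).trans_le <|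
    Finset.single_le_sum (fun j _ => Real.rpow_nonneg (hp j) α) (Finset.mem_univ i)

theorem mul_sum_div_rpow {ι : Type*} [Fintype ι] {c : ℝ} (hc : 0 < c) {p : ι → ℝ}
    (hp : ∀ i, 0 ≤ p i) (α : ℝ) : c * ∑ i, (p i / c) ^ α = c ^ (1 - α) * ∑ i, p i ^ α := by
  simp only [Real.div_rpow (hp _) hc.le, ← Finset.sum_div, Real.rpow_sub hc, Real.rpow_one]
  ring

theorem Real.logb_div_le_logb_div_of_div_le {b x y c : ℝ} (hb : 1 < b) (hx : 0 < x)
    (hy : 0 < y) (h : x / c ≤ y / c) : logb b x / c ≤ logb b y / c := by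
  rcases lt_trichotomy c 0 with hc | rfl | hc
  · rw [div_le_div_right_of_neg hc] at h ⊢
    exact logb_le_logb_of_le hb hy h
  · simp
  · rw [div_le_div_iff_of_pos_right hc] at h ⊢
    exact logb_le_logb_of_le hb hx h

section PartialTrace

variable {dA dB : ℕ}

theorem ptraceB_eq_sum_submatrix (ρ : Matrix (Fin dA × Fin dB) (Fin dA × Fin dB) ℂ) :
    ptraceB ρ = ∑ j, ρ.submatrix (·, j) (·, j) := by
  ext i i'
  simp [ptraceB, Matrix.sum_apply]

theorem Matrix.IsHermitian.ptraceB {ρ : Matrix (Fin dA × Fin dB) (Fin dA × Fin dB) ℂ}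
    (hρ : ρ.IsHermitian) : (ptraceB ρ).IsHermitian := by
  rw [ptraceB_eq_sum_submatrix]
  exact isSelfAdjoint_sum _ fun j _ => hρ.submatrix _

theorem Matrix.PosSemidef.ptraceB {ρ : Matrix (Fin dA × Fin dB) (Fin dA × Fin dB) ℂ}
    (hρ : ρ.PosSemidef) : (ptraceB ρ).PosSemidef := by
  rw [ptraceB_eq_sum_submatrix]
  exact posSemidef_sum _ fun j _ => hρ.submatrix _

theorem trace_ptraceB (ρ : Matrix (Fin dA × Fin dB) (Fin dA × Fin dB) ℂ) :
    (ptraceB ρ).trace = ρ.trace := by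
  simp [ptraceB, trace, Fintype.sum_prod_type]

theorem ptraceB_star_kronecker_one_mul_mul (V : Matrix (Fin dA) (Fin dA) ℂ)
    (ρ : Matrix (Fin dA × Fin dB) (Fin dA × Fin dB) ℂ) :
    ptraceB (star (V ⊗ₖ 1) * ρ * (V ⊗ₖ 1)) = star V * ptraceB ρ * V := by
  rw [star_eq_conjTranspose, conjTranspose_kronecker, conjTranspose_one, ← star_eq_conjTranspose]
  ext i i'
  simp only [ptraceB, of_apply, mul_apply, kroneckerMap_apply, one_apply, Fintype.sum_prod_type,
    mul_ite, ite_mul, mul_one, mul_zero, zero_mul, Finset.sum_ite_eq, Finset.sum_ite_eq',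
    Finset.mem_univ, if_true, Finset.mul_sum, Finset.sum_mul]
  rw [Finset.sum_comm]
  exact Finset.sum_congr rfl fun _ _ => Finset.sum_comm

theorem exists_doublyStochastic_sum_mulVec_eq_ptraceB_eigenvalues
    {ρ : Matrix (Fin dA × Fin dB) (Fin dA × Fin dB) ℂ} (hρ : ρ.IsHermitian) :
    ∃ D ∈ doublyStochastic ℝ (Fin dA × Fin dB),
      ∀ i, ∑ k, (D *ᵥ hρ.eigenvalues) (i, k) = hρ.ptraceB.eigenvalues i := by
  set V := hρ.ptraceB.eigenvectorUnitary
  have hW : (V : Matrix (Fin dA) (Fin dA) ℂ) ⊗ₖ (1 : Matrix (Fin dB) (Fin dB) ℂ) ∈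
      unitaryGroup (Fin dA × Fin dB) ℂ := kronecker_mem_unitary V.2 (one_mem _)
  obtain ⟨D, hD, hdiag⟩ := hρ.exists_doublyStochastic_conj_diag_eq_mulVec_eigenvalues hW
  refine ⟨D, hD, fun i => ?_⟩
  have hVdiag := hρ.ptraceB.conjStarAlgAut_star_eigenvectorUnitary
  rw [Unitary.conjStarAlgAut_star_apply] at hVdiag
  have h := congr_fun₂ (ptraceB_star_kronecker_one_mul_mul (V : Matrix (Fin dA) (Fin dA) ℂ) ρ) i i
  rw [hVdiag] at h
  simp only [ptraceB, of_apply, hdiag, diagonal_apply_eq, Function.comp_apply] at h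
  exact_mod_cast h

theorem sum_map_eigenvalues_le_mul_sum_map_ptraceB_eigenvalues (hdB : 0 < dB) {g : ℝ → ℝ}
    (hg : ConcaveOn ℝ (Set.Ici 0) g) {ρ : Matrix (Fin dA × Fin dB) (Fin dA × Fin dB) ℂ}
    (hρ : ρ.PosSemidef) :
    ∑ p, g (hρ.1.eigenvalues p) ≤ dB * ∑ i, g (hρ.1.ptraceB.eigenvalues i / dB) := by
  obtain ⟨D, hD, hsum⟩ := exists_doublyStochastic_sum_mulVec_eq_ptraceB_eigenvalues hρ.1
  have hx : ∀ p, (D *ᵥ hρ.1.eigenvalues) p ∈ Set.Ici 0 := fun p =>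
    Finset.sum_nonneg fun q _ => mul_nonneg (hD.1 p q) (hρ.eigenvalues_nonneg q)
  have : NeZero dB := ⟨hdB.ne'⟩
  calc ∑ p, g (hρ.1.eigenvalues p)
      ≤ ∑ p, g ((D *ᵥ hρ.1.eigenvalues) p) :=
        hg.sum_le_sum_map_mulVec hD fun q => hρ.eigenvalues_nonneg q
    _ = ∑ i, ∑ k, g ((D *ᵥ hρ.1.eigenvalues) (i, k)) := Fintype.sum_prod_type _
    _ ≤ ∑ i, dB * g ((∑ k, (D *ᵥ hρ.1.eigenvalues) (i, k)) / dB) := by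
        gcongr with i
        simpa using hg.sum_le_card_mul_map_average fun k => hx (i, k)
    _ = dB * ∑ i, g (hρ.1.ptraceB.eigenvalues i / dB) := by
        simp only [hsum, Finset.mul_sum]

end PartialTrace

theorem renyiEntropy_eq {n : Type*} [Fintype n] [DecidableEq n] {ρ : Matrix n n ℂ}
    (hρ : ρ.IsHermitian) (α : ℝ) :
    renyiEntropy α ρ = Real.logb 2 (∑ i, hρ.eigenvalues i ^ α) / (1 - α) := by
  rw [renyiEntropy, dif_pos hρ, one_div_mul_eq_div]

/-- **Weak subadditivity of Rényi entropies.**  For a bipartite state `ρ_AB` (positive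
semidefinite, trace one) with reduced state `ρ_A`, every real order `α ≥ 0`, `α ≠ 1`,
satisfies `S_R^{(α)}(ρ_AB) ≤ S_R^{(α)}(ρ_A) + log₂ d_B`; equivalently,
`log₂(d_A d_B) − S_R^{(α)}(ρ_AB) ≥ log₂ d_A − S_R^{(α)}(ρ_A)`. -/
theorem renyi_weak_subadditivity (dA dB : ℕ) (hdA : 0 < dA) (hdB : 0 < dB)
    (α : ℝ) (hα0 : 0 ≤ α) (hα1 : α ≠ 1)
    (ρAB : Matrix (Fin dA × Fin dB) (Fin dA × Fin dB) ℂ)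
    (hρ : ρAB.PosSemidef) (htr : ρAB.trace = 1) :
    renyiEntropy α ρAB ≤ renyiEntropy α (ptraceB ρAB) + Real.logb 2 dB
    ∧ Real.logb 2 ((dA : ℝ) * dB) - renyiEntropy α ρAB
        ≥ Real.logb 2 dA - renyiEntropy α (ptraceB ρAB) := by
  have hdB' : (0 : ℝ) < dB := Nat.cast_pos.mpr hdB
  have hμ := hρ.ptraceB.eigenvalues_nonneg
  have hsumAB := sum_rpow_pos hρ.eigenvalues_nonneg (hρ.1.sum_eigenvalues_eq_one htr) α
  have hsumA := sum_rpow_pos hμ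
    (hρ.1.ptraceB.sum_eigenvalues_eq_one ((trace_ptraceB ρAB).trans htr)) α
  have hpow := sum_map_eigenvalues_le_mul_sum_map_ptraceB_eigenvalues hdB
    (concaveOn_rpow_div_one_sub hα0) hρ
  rw [← Finset.sum_div, ← Finset.sum_div, ← mul_div_assoc, mul_sum_div_rpow hdB' hμ] at hpow
  have hlog := Real.logb_div_le_logb_div_of_div_le one_lt_two hsumAB
    (mul_pos (Real.rpow_pos_of_pos hdB' _) hsumA) hpow
  rw [Real.logb_mul (Real.rpow_pos_of_pos hdB' _).ne' hsumA.ne',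
    Real.logb_rpow_eq_mul_logb_of_pos hdB', add_div,
    mul_div_cancel_left₀ _ (sub_ne_zero.mpr hα1.symm)] at hlog
  have hsub : renyiEntropy α ρAB ≤ renyiEntropy α (ptraceB ρAB) + Real.logb 2 dB := by
    rw [renyiEntropy_eq hρ.1, renyiEntropy_eq hρ.1.ptraceB]
    linarith
  refine ⟨hsub, ?_⟩
  rw [Real.logb_mul (Nat.cast_pos.mpr hdA).ne' hdB'.ne']
  linarith
end
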